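/- There exists a weight-preserving sign-reversing involution on the set of G-configurations of size n that are not lone-child-avoiding spanning trees: the involution changes the number of tree vertices by exactly one (hence reverses the weight (-1)^{n-k}), and its fixed-point-free domain is exactly the set of G-configurations that either have an arc vertex or have a tree vertex with exactly one child. -/

import Mathlib

/-- A rooted `G`-configuration of size `n`: a nonempty subset `V ⊆ [n]`, an undirected
tree on `V` with a designated root `r ∈ V` (represented as a graph on `Fin n` whose edges
lie inside `V`, acyclic and connected on `V`), and for each vertex outside `V` exactly one
arc to a vertex `≠ r`, no two arcs ending at the same vertex.  (The arc map is recorded as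
a total function that is the identity on `V`.) -/
structure GConfig (n : ℕ) where
  V : Finset (Fin n)
  root : Fin n
  hroot : root ∈ V
  tree : SimpleGraph (Fin n)
  hedge : ∀ v w, tree.Adj v w → v ∈ V ∧ w ∈ V
  hconn : ∀ v ∈ V, ∀ w ∈ V, tree.Reachable v w
  hacyc : tree.IsAcyclic
  arc : Fin n → Fin n
  harcV : ∀ v ∈ V, arc v = v
  harc : ∀ v, v ∉ V → arc v ≠ root
  hinj : ∀ v w, v ∉ V → w ∉ V → arc v = arc w → v = w

/-- The set of children of `v` in the graph `G` rooted at `r`. -/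
def children {n : ℕ} (G : SimpleGraph (Fin n)) (r v : Fin n) : Set (Fin n) :=
  {w | G.Adj v w ∧ G.dist r w = G.dist r v + 1}

/-!
A configuration rooted at `r` is encoded as a `ParentMap`, one self-map sending tree vertices to
their parents and arc vertices to the heads of their arcs. Call a vertex toggleable if it is an
arc vertex or the only child of its parent. Toggling an arc vertex `v` grafts it into the tree as
the only child of a vertex `q`, which hands its children over to `v`; toggling a lone child `v`
contracts it into its parent and turns it into an arc vertex. The vertex `q` is found by following
arcs forward from `v` until they enter the tree (it is the root if they come back to `v`), and the
new arc of a contracted vertex by following arcs backward, which makes the two operations mutually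
inverse. Both preserve the set of toggleable vertices, so toggling a choice of toggleable vertex
that depends only on this set is an involution, and it changes the number of tree vertices by one.
-/

open SimpleGraph Function

section Iterate

variable {α : Type*}

theorem iterate_eq_iterate_of_forall_notMem {f g : α → α} {s : Set α}
    (hfg : ∀ x ∉ s, g x = f x) {x : α} {m : ℕ} (h : ∀ i < m, f^[i] x ∉ s) :
    g^[m] x = f^[m] x := by
  induction m with
  | zero => rfl
  | succ m ih =>
    rw [iterate_succ_apply', iterate_succ_apply', ih fun i hi => h i (by omega),
      hfg _ (h m (by omega))]

theorem exists_iterate_eq_of_forall_exists_lt {f : α → α} {s : Set α} {r : α} (μ : α → ℕ)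
    (h : ∀ x ∈ s, x ≠ r → ∃ k, f^[k] x ∈ s ∧ μ (f^[k] x) < μ x) :
    ∀ x ∈ s, ∃ k, f^[k] x = r := by
  intro x hx
  induction hμ : μ x using Nat.strong_induction_on generalizing x with
  | _ n ih =>
    by_cases hxr : x = r
    · exact ⟨0, hxr⟩
    obtain ⟨k, hks, hlt⟩ := h x hx hxr
    obtain ⟨j, hj⟩ := ih _ (hμ ▸ hlt) _ hks rfl
    exact ⟨j + k, by rwa [iterate_add_apply]⟩

end Iterate

namespace SimpleGraph

variable {α : Type*} (G : SimpleGraph α) (r : α)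

open scoped Classical in
noncomputable def treeParent (v : α) : α :=
  if h : ∃ w, G.Adj w v ∧ G.Reachable r w ∧ G.dist r w + 1 = G.dist r v then h.choose else v

variable {G r} {v w : α}

theorem exists_adj_dist_add_one_eq (hv : G.Reachable r v) (hvr : v ≠ r) :
    ∃ w, G.Adj w v ∧ G.Reachable r w ∧ G.dist r w + 1 = G.dist r v := by
  obtain ⟨p, hp⟩ := hv.exists_walk_length_eq_dist
  have hnil : ¬p.Nil := fun h => hvr (h.eq).symm
  have hadj := p.adj_penultimate hnil
  refine ⟨p.penultimate, hadj, ⟨p.dropLast⟩, ?_⟩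
  have hle := dist_le p.dropLast
  have hpos := hv.pos_dist_of_ne hvr.symm
  rw [p.length_dropLast, hp] at hle
  rcases hadj.diff_dist_adj (u := r) with h | h | h <;> omega

theorem treeParent_spec (hv : G.Reachable r v) (hvr : v ≠ r) :
    G.Adj (G.treeParent r v) v ∧ G.Reachable r (G.treeParent r v) ∧
      G.dist r (G.treeParent r v) + 1 = G.dist r v := by
  have h := exists_adj_dist_add_one_eq hv hvr
  rw [treeParent, dif_pos h]
  exact h.choose_spec

@[simp]
theorem treeParent_self : G.treeParent r r = r := by
  rw [treeParent, dif_neg]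
  rintro ⟨w, -, -, h⟩
  simp at h

theorem IsAcyclic.eq_treeParent (hG : G.IsAcyclic) (hadj : G.Adj w v) (hw : G.Reachable r w)
    (hd : G.dist r w + 1 = G.dist r v) : w = G.treeParent r v := by
  have hv := hw.trans hadj.reachable
  have hvr : v ≠ r := by rintro rfl; simp at hd
  obtain ⟨hadj', hp, hd'⟩ := treeParent_spec hv hvr
  obtain ⟨p, hpl⟩ := hw.exists_walk_length_eq_dist
  obtain ⟨p', hpl'⟩ := hp.exists_walk_length_eq_dist
  have hpath := (p.concat hadj).isPath_of_length_eq_dist (by rw [Walk.length_concat, hpl, hd])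
  have hpath' := (p'.concat hadj').isPath_of_length_eq_dist (by rw [Walk.length_concat, hpl', hd'])
  have := congrArg (fun q : G.Path r v => q.1.penultimate)
    ((hG.subsingleton_path r v).elim ⟨_, hpath⟩ ⟨_, hpath'⟩)
  simpa only [Walk.penultimate_concat] using this

end SimpleGraph

/-- A tree on `V` rooted at `r` together with arcs out of the vertices outside `V`, encoded by one
self-map `f`: a tree vertex goes to its parent (the root to itself), an arc vertex to the head of
its arc. -/
@[ext]
structure ParentMap (α : Type*) (r : α) where
  V : Finset α
  root_mem : r ∈ V
  f : α → α
  f_root : f r = r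
  f_mem : ∀ v ∈ V, f v ∈ V
  exists_iterate_eq_root : ∀ v ∈ V, ∃ k, f^[k] v = r
  f_ne_root : ∀ v ∉ V, f v ≠ r
  injOn_compl : ∀ ⦃v w⦄, v ∉ V → w ∉ V → f v = f w → v = w

namespace ParentMap

variable {α : Type*} {r : α} (Q : ParentMap α r) {u v w t : α}

open scoped Classical in
noncomputable def depth (v : α) : ℕ :=
  if h : ∃ k, Q.f^[k] v = r then Nat.find h else 0

theorem iterate_depth (hv : v ∈ Q.V) : Q.f^[Q.depth v] v = r := by
  classical
  have h := Q.exists_iterate_eq_root v hv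
  rw [depth, dif_pos h]
  exact Nat.find_spec h

theorem depth_le {k : ℕ} (h : Q.f^[k] v = r) : Q.depth v ≤ k := by
  classical
  rw [depth, dif_pos ⟨k, h⟩]
  exact Nat.find_le h

@[simp]
theorem depth_root : Q.depth r = 0 :=
  Nat.le_zero.mp (Q.depth_le (k := 0) rfl)

theorem depth_eq_depth_f_add_one (hv : v ∈ Q.V) (hvr : v ≠ r) :
    Q.depth v = Q.depth (Q.f v) + 1 := by
  have hpos : 0 < Q.depth v := by
    by_contra h
    exact hvr (by simpa [Nat.le_zero.mp (not_lt.mp h)] using Q.iterate_depth hv)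
  have h₁ : Q.depth (Q.f v) ≤ Q.depth v - 1 := Q.depth_le <| by
    rw [← iterate_succ_apply, Nat.succ_eq_add_one, Nat.sub_add_cancel hpos, Q.iterate_depth hv]
  have h₂ : Q.depth v ≤ Q.depth (Q.f v) + 1 :=
    Q.depth_le <| by rw [iterate_succ_apply, Q.iterate_depth (Q.f_mem v hv)]
  omega

theorem f_ne_self (hv : v ∈ Q.V) (hvr : v ≠ r) : Q.f v ≠ v := fun h => by
  have := Q.depth_eq_depth_f_add_one hv hvr
  rw [h] at this
  omega

def children (q : α) : Set α := {w | w ∈ Q.V ∧ w ≠ r ∧ Q.f w = q}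

theorem root_notMem_children (q : α) : r ∉ Q.children q := fun h => h.2.1 rfl

def toggleable : Set α := {v | v ∉ Q.V ∨ Q.children (Q.f v) = {v}}

theorem ne_root_of_mem_toggleable (hv : v ∈ Q.toggleable) (hV : v ∈ Q.V) :
    v ≠ r ∧ Q.children (Q.f v) = {v} := by
  have hlone := hv.resolve_left (not_not.mpr hV)
  refine ⟨fun h => Q.root_notMem_children (Q.f v) ?_, hlone⟩
  rw [hlone, h]
  rfl

section Graph

def graph : SimpleGraph α := SimpleGraph.fromRel fun v w => v ∈ Q.V ∧ v ≠ r ∧ Q.f v = w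

theorem graph_adj : Q.graph.Adj v w ↔
    v ≠ w ∧ ((v ∈ Q.V ∧ v ≠ r ∧ Q.f v = w) ∨ (w ∈ Q.V ∧ w ≠ r ∧ Q.f w = v)) :=
  fromRel_adj _ _ _

theorem graph_adj_f (hv : v ∈ Q.V) (hvr : v ≠ r) : Q.graph.Adj v (Q.f v) :=
  Q.graph_adj.mpr ⟨(Q.f_ne_self hv hvr).symm, .inl ⟨hv, hvr, rfl⟩⟩

theorem mem_of_graph_adj (h : Q.graph.Adj v w) : v ∈ Q.V ∧ w ∈ Q.V := by
  rcases (Q.graph_adj.mp h).2 with ⟨hv, -, rfl⟩ | ⟨hw, -, rfl⟩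
  · exact ⟨hv, Q.f_mem v hv⟩
  · exact ⟨Q.f_mem w hw, hw⟩

theorem f_eq_of_graph_adj (h : Q.graph.Adj v w) (hd : Q.depth w ≤ Q.depth v) : Q.f v = w := by
  rcases (Q.graph_adj.mp h).2 with ⟨-, -, hf⟩ | ⟨hw, hwr, rfl⟩
  · exact hf
  · have := Q.depth_eq_depth_f_add_one hw hwr
    omega

theorem depth_le_depth_add_length {x y : α} (p : Q.graph.Walk x y) :
    Q.depth y ≤ Q.depth x + p.length := by
  induction p with
  | nil => simp
  | @cons x z y h p ih =>
    have : Q.depth z ≤ Q.depth x + 1 := by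
      by_contra hlt
      have := Q.f_eq_of_graph_adj h.symm (by omega)
      have := Q.depth_eq_depth_f_add_one (Q.mem_of_graph_adj h).2 (by
        rintro rfl
        simp at hlt)
      simp_all
    simp only [Walk.length_cons]
    omega

theorem exists_walk_length_eq_depth (hv : v ∈ Q.V) :
    ∃ p : Q.graph.Walk v r, p.length = Q.depth v := by
  induction hd : Q.depth v generalizing v with
  | zero =>
    obtain rfl : v = r := by simpa [hd] using Q.iterate_depth hv
    exact ⟨.nil, rfl⟩
  | succ d ih =>
    have hvr : v ≠ r := by rintro rfl; simp at hd
    obtain ⟨p, hp⟩ := ih (Q.f_mem v hv) (by have := Q.depth_eq_depth_f_add_one hv hvr; omega)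
    exact ⟨.cons (Q.graph_adj_f hv hvr) p, by simp [hp]⟩

theorem graph_dist_root (hv : v ∈ Q.V) : Q.graph.dist r v = Q.depth v := by
  obtain ⟨p, hp⟩ := Q.exists_walk_length_eq_depth hv
  obtain ⟨q, hq⟩ := p.reverse.reachable.exists_walk_length_eq_dist
  have := Q.depth_le_depth_add_length q
  have := dist_le p.reverse
  simp only [depth_root, Walk.length_reverse] at *
  omega

theorem graph_isAcyclic : Q.graph.IsAcyclic := by
  classical
  intro x c hc
  obtain ⟨m, hm, hmax⟩ := c.support.toFinset.exists_max_image Q.depth ⟨x, by simp⟩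
  rw [List.mem_toFinset] at hm
  set c' := c.rotate m hm
  have hc' : c'.IsCycle := hc.rotate hm
  have hparent : ∀ {w}, Q.graph.Adj m w → w ∈ c'.support → w = Q.f m := fun hadj hw =>
    (Q.f_eq_of_graph_adj hadj (hmax _ (by
      rw [List.mem_toFinset, ← c.mem_support_rotate_iff m hm]
      exact hw))).symm
  exact hc'.snd_ne_penultimate <|
    (hparent (c'.adj_snd hc'.not_nil) (c'.getVert_mem_support _)).trans
      (hparent (c'.adj_penultimate hc'.not_nil).symm (c'.getVert_mem_support _)).symm

theorem graph_reachable_root (hv : v ∈ Q.V) : Q.graph.Reachable v r :=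
  (Q.exists_walk_length_eq_depth hv).choose.reachable

theorem treeParent_graph (hv : v ∈ Q.V) : Q.graph.treeParent r v = Q.f v := by
  by_cases hvr : v = r
  · rw [hvr, treeParent_self, Q.f_root]
  refine (Q.graph_isAcyclic.eq_treeParent (Q.graph_adj_f hv hvr).symm
    (Q.graph_reachable_root (Q.f_mem v hv)).symm ?_).symm
  rw [Q.graph_dist_root hv, Q.graph_dist_root (Q.f_mem v hv), Q.depth_eq_depth_f_add_one hv hvr]

end Graph

section ArcWalk

def IsArcWalk (x : α) (m : ℕ) : Prop := ∀ i < m, Q.f^[i] x ∉ Q.V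

theorem IsArcWalk.iterate {x : α} {m d : ℕ} (h : Q.IsArcWalk x (m + d)) :
    Q.IsArcWalk (Q.f^[d] x) m := fun i hi => by
  rw [← iterate_add_apply]
  exact h _ (by omega)

theorem eq_of_iterate_eq {x y : α} {m : ℕ} (hx : Q.IsArcWalk x m) (hy : Q.IsArcWalk y m)
    (h : Q.f^[m] x = Q.f^[m] y) : x = y := by
  induction m generalizing x y with
  | zero => exact h
  | succ m ih =>
    exact Q.injOn_compl (hx 0 (by omega)) (hy 0 (by omega)) (ih hx.iterate hy.iterate h)

theorem eq_of_isArcWalk_of_forall_ne {u' : α} {m m' : ℕ} (hu : Q.IsArcWalk u m)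
    (hu' : Q.IsArcWalk u' m') (h : Q.f^[m] u = Q.f^[m'] u') (hsu : ∀ w ∉ Q.V, Q.f w ≠ u)
    (hsu' : ∀ w ∉ Q.V, Q.f w ≠ u') : u = u' := by
  wlog hle : m ≤ m' generalizing u u' m m'
  · exact (this hu' hu h.symm hsu' hsu (by omega)).symm
  obtain ⟨d, rfl⟩ := Nat.exists_eq_add_of_le hle
  have hud : u = Q.f^[d] u' :=
    Q.eq_of_iterate_eq hu hu'.iterate (by rw [← iterate_add_apply]; exact h)
  rcases d with _ | d
  · exact hud
  · exact (hsu _ (hu' d (by omega)) (by rw [hud, iterate_succ_apply'])).elim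

open scoped Classical in
noncomputable def landing (v : α) : α :=
  if h : ∃ k, 0 < k ∧ (Q.f^[k] v ∈ Q.V ∨ Q.f^[k] v = v) then Q.f^[Nat.find h] v else v

theorem landing_eq {k : ℕ} (hk : 0 < k) (hland : Q.f^[k] v ∈ Q.V ∨ Q.f^[k] v = v)
    (hmid : ∀ i, 0 < i → i < k → Q.f^[i] v ∉ Q.V ∧ Q.f^[i] v ≠ v) : Q.landing v = Q.f^[k] v := by
  classical
  have h : ∃ k, 0 < k ∧ (Q.f^[k] v ∈ Q.V ∨ Q.f^[k] v = v) := ⟨k, hk, hland⟩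
  rw [landing, dif_pos h]
  congr 1
  refine (Nat.find_eq_iff h).mpr ⟨⟨hk, hland⟩, fun i hik ⟨hi, hi'⟩ => ?_⟩
  have := hmid i hi hik
  tauto

open scoped Classical in
noncomputable def source (t : α) : α :=
  if h : ∃ u m, Q.IsArcWalk u m ∧ Q.f^[m] u = t ∧ ∀ w ∉ Q.V, Q.f w ≠ u then h.choose else t

theorem source_eq {m : ℕ} (hu : Q.IsArcWalk u m) (hm : Q.f^[m] u = t)
    (hsu : ∀ w ∉ Q.V, Q.f w ≠ u) : Q.source t = u := by
  classical
  have h : ∃ u m, Q.IsArcWalk u m ∧ Q.f^[m] u = t ∧ ∀ w ∉ Q.V, Q.f w ≠ u := ⟨u, m, hu, hm, hsu⟩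
  rw [source, dif_pos h]
  obtain ⟨m', hu', hm', hsu'⟩ := h.choose_spec
  exact Q.eq_of_isArcWalk_of_forall_ne hu' hu (hm'.trans hm.symm) hsu' hsu

variable [Finite α]

theorem exists_return (hv : v ∉ Q.V) : ∃ k, 0 < k ∧ (Q.f^[k] v ∈ Q.V ∨ Q.f^[k] v = v) := by
  by_contra! h
  have hwalk : ∀ m, Q.IsArcWalk v m := fun m i _ => by
    rcases i with _ | i
    · exact hv
    · exact (h _ i.succ_pos).1
  obtain ⟨i, j, hij, heq⟩ := Finite.exists_ne_map_eq_of_infinite fun k => Q.f^[k] v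
  wlog hlt : i < j generalizing i j
  · exact this j i hij.symm heq.symm (by omega)
  have : v = Q.f^[j - i] v := Q.eq_of_iterate_eq (hwalk i) (hwalk (i + (j - i))).iterate
    (by rw [← iterate_add_apply, Nat.add_sub_cancel' hlt.le]; exact heq)
  exact (h (j - i) (by omega)).2 this.symm

theorem exists_first_return (hv : v ∉ Q.V) : ∃ k, 0 < k ∧ (Q.f^[k] v ∈ Q.V ∨ Q.f^[k] v = v) ∧
    ∀ i, 0 < i → i < k → Q.f^[i] v ∉ Q.V ∧ Q.f^[i] v ≠ v := by
  classical
  have h := Q.exists_return hv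
  refine ⟨Nat.find h, (Nat.find_spec h).1, (Nat.find_spec h).2, fun i hi hik => ?_⟩
  exact not_or.mp (not_and.mp (Nat.find_min h hik) hi)

theorem landing_ne_root (hv : v ∉ Q.V) : Q.landing v ≠ r := by
  obtain ⟨k, hk, hland, hmid⟩ := Q.exists_first_return hv
  rw [Q.landing_eq hk hland hmid, ← Nat.sub_add_cancel hk, iterate_succ_apply']
  refine Q.f_ne_root _ fun hmem => ?_
  rcases Nat.eq_zero_or_pos (k - 1) with h0 | hpos
  · exact hv (by rwa [h0] at hmem)
  · exact (hmid (k - 1) hpos (by omega)).1 hmem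

theorem exists_source (ht : t ∈ Q.V) :
    ∃ u m, Q.IsArcWalk u m ∧ Q.f^[m] u = t ∧ ∀ w ∉ Q.V, Q.f w ≠ u := by
  by_contra! h
  have hwalks : ∀ m, ∃ u, Q.IsArcWalk u m ∧ Q.f^[m] u = t := by
    intro m
    induction m with
    | zero => exact ⟨t, fun i hi => absurd hi (Nat.not_lt_zero i), rfl⟩
    | succ m ih =>
      obtain ⟨u, hu, hut⟩ := ih
      obtain ⟨w, hw, rfl⟩ := h u m hu hut
      refine ⟨w, fun i hi => ?_, hut⟩
      rcases i with _ | i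
      · exact hw
      · rw [iterate_succ_apply]
        exact hu i (by omega)
  choose x hx using hwalks
  obtain ⟨i, j, hij, heq⟩ := Finite.exists_ne_map_eq_of_infinite x
  wlog hlt : i < j generalizing i j
  · exact this j i hij.symm heq.symm (by omega)
  exact (hx j).1 i hlt (by rw [← heq, (hx i).2]; exact ht)

theorem source_spec (ht : t ∈ Q.V) : ∃ m, Q.IsArcWalk (Q.source t) m ∧
    Q.f^[m] (Q.source t) = t ∧ ∀ w ∉ Q.V, Q.f w ≠ Q.source t := by
  classical
  have h := Q.exists_source ht
  rw [source, dif_pos h]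
  exact h.choose_spec

end ArcWalk

section Toggle

variable [DecidableEq α] {q : α}

section Graft

def graftFun (v q w : α) : α :=
  if w = v then q else if w ∈ Q.V ∧ w ≠ r ∧ Q.f w = q then v else Q.f w

theorem graftFun_self : Q.graftFun v q v = q := if_pos rfl

theorem graftFun_of_mem_children (hw : w ∈ Q.children q) (hwv : w ≠ v) :
    Q.graftFun v q w = v := by
  rw [graftFun, if_neg hwv]
  exact if_pos hw

theorem graftFun_of_notMem_children (hw : w ∉ Q.children q) (hwv : w ≠ v) :
    Q.graftFun v q w = Q.f w := by
  rw [graftFun, if_neg hwv]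
  exact if_neg hw

theorem graftFun_of_notMem (hw : w ∉ Q.V) (hwv : w ≠ v) : Q.graftFun v q w = Q.f w :=
  Q.graftFun_of_notMem_children (fun h => hw h.1) hwv

theorem exists_iterate_graftFun_eq_root (hv : v ∉ Q.V) (hq : q ∈ Q.V) :
    ∀ w ∈ insert v Q.V, ∃ k, (Q.graftFun v q)^[k] w = r := by
  have hV : ∀ w ∈ (Q.V : Set α), ∃ k, (Q.graftFun v q)^[k] w = r := by
    refine exists_iterate_eq_of_forall_exists_lt Q.depth fun w hw hwr => ?_
    have hwv : w ≠ v := by rintro rfl; exact hv hw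
    have hdw := Q.depth_eq_depth_f_add_one hw hwr
    by_cases hch : w ∈ Q.children q
    · refine ⟨2, ?_, ?_⟩ <;>
        simp only [iterate_succ, iterate_zero, comp_apply, id_eq,
          Q.graftFun_of_mem_children hch hwv, graftFun_self]
      · exact hq
      · rw [hch.2.2] at hdw
        omega
    · refine ⟨1, ?_, ?_⟩ <;> simp only [iterate_one, Q.graftFun_of_notMem_children hch hwv]
      · exact Q.f_mem w hw
      · omega
  intro w hw
  rcases Finset.mem_insert.mp hw with rfl | hw
  · obtain ⟨k, hk⟩ := hV q hq
    exact ⟨k + 1, by rwa [iterate_succ_apply, graftFun_self]⟩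
  · exact hV w hw

def graft (v q : α) (hv : v ∉ Q.V) (hq : q ∈ Q.V) : ParentMap α r where
  V := insert v Q.V
  root_mem := Finset.mem_insert_of_mem Q.root_mem
  f := Q.graftFun v q
  f_root := by
    have hrv : r ≠ v := by rintro rfl; exact hv Q.root_mem
    rw [Q.graftFun_of_notMem_children (Q.root_notMem_children q) hrv, Q.f_root]
  f_mem w hw := by
    by_cases hwv : w = v
    · rw [hwv, graftFun_self]
      exact Finset.mem_insert_of_mem hq
    by_cases hch : w ∈ Q.children q
    · rw [Q.graftFun_of_mem_children hch hwv]
      exact Finset.mem_insert_self v Q.V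
    · rw [Q.graftFun_of_notMem_children hch hwv]
      exact Finset.mem_insert_of_mem (Q.f_mem w ((Finset.mem_insert.mp hw).resolve_left hwv))
  exists_iterate_eq_root := Q.exists_iterate_graftFun_eq_root hv hq
  f_ne_root w hw := by
    rw [Finset.mem_insert, not_or] at hw
    rw [Q.graftFun_of_notMem hw.2 hw.1]
    exact Q.f_ne_root w hw.2
  injOn_compl w w' hw hw' := by
    rw [Finset.mem_insert, not_or] at hw hw'
    rw [Q.graftFun_of_notMem hw.2 hw.1, Q.graftFun_of_notMem hw'.2 hw'.1]
    exact Q.injOn_compl hw.2 hw'.2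

variable (hv : v ∉ Q.V) (hq : q ∈ Q.V)

@[simp] theorem graft_V : (Q.graft v q hv hq).V = insert v Q.V := rfl

@[simp] theorem graft_f : (Q.graft v q hv hq).f = Q.graftFun v q := rfl

theorem children_graft_self : (Q.graft v q hv hq).children v = Q.children q := by
  ext w
  simp only [children, graft_V, graft_f, Set.mem_ofPred_eq, Finset.mem_insert]
  constructor
  · rintro ⟨rfl | hw, hwr, hfw⟩
    · rw [graftFun_self] at hfw
      exact absurd (hfw ▸ hq) hv
    · have hwv : w ≠ v := by rintro rfl; exact hv hw
      by_contra hch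
      rw [Q.graftFun_of_notMem_children hch hwv] at hfw
      exact hv (hfw ▸ Q.f_mem w hw)
  · intro hw
    have hwv : w ≠ v := by rintro rfl; exact hv hw.1
    exact ⟨.inr hw.1, hw.2.1, Q.graftFun_of_mem_children hw hwv⟩

theorem children_graft_target : (Q.graft v q hv hq).children q = {v} := by
  ext w
  simp only [children, graft_V, graft_f, Set.mem_ofPred_eq, Finset.mem_insert,
    Set.mem_singleton_iff]
  constructor
  · rintro ⟨rfl | hw, hwr, hfw⟩
    · rfl
    · have hwv : w ≠ v := by rintro rfl; exact hv hw
      by_contra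
      by_cases hch : w ∈ Q.children q
      · rw [Q.graftFun_of_mem_children hch hwv] at hfw
        exact hv (hfw ▸ hq)
      · rw [Q.graftFun_of_notMem_children hch hwv] at hfw
        exact hch ⟨hw, hwr, hfw⟩
  · rintro rfl
    exact ⟨.inl rfl, by rintro rfl; exact hv Q.root_mem, Q.graftFun_self⟩

theorem children_graft_of_ne {x : α} (hxv : x ≠ v) (hxq : x ≠ q) :
    (Q.graft v q hv hq).children x = Q.children x := by
  ext w
  simp only [children, graft_V, graft_f, Set.mem_ofPred_eq, Finset.mem_insert]
  constructor
  · rintro ⟨rfl | hw, hwr, hfw⟩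
    · exact absurd (Q.graftFun_self ▸ hfw).symm hxq
    · have hwv : w ≠ v := by rintro rfl; exact hv hw
      by_cases hch : w ∈ Q.children q
      · exact absurd (Q.graftFun_of_mem_children hch hwv ▸ hfw).symm hxv
      · exact ⟨hw, hwr, Q.graftFun_of_notMem_children hch hwv ▸ hfw⟩
  · rintro ⟨hw, hwr, rfl⟩
    have hwv : w ≠ v := by rintro rfl; exact hv hw
    exact ⟨.inr hw, hwr, Q.graftFun_of_notMem_children (fun h => hxq h.2.2) hwv⟩

theorem toggleable_graft : (Q.graft v q hv hq).toggleable = Q.toggleable := by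
  ext w
  simp only [toggleable, graft_V, graft_f, Set.mem_ofPred_eq, Finset.mem_insert, not_or]
  by_cases hwv : w = v
  · subst hwv
    simp only [not_true_eq_false, false_and, false_or, hv, not_false_eq_true, true_or,
      graftFun_self, Q.children_graft_target hv hq]
  by_cases hw : w ∈ Q.V
  · simp only [hwv, hw, not_true_eq_false, and_false, false_or]
    by_cases hch : w ∈ Q.children q
    · rw [Q.graftFun_of_mem_children hch hwv, Q.children_graft_self hv hq, hch.2.2]
    rw [Q.graftFun_of_notMem_children hch hwv]
    by_cases hfq : Q.f w = q
    · have hwr : w = r := by_contra fun hwr => hch ⟨hw, hwr, hfq⟩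
      rw [hfq, Q.children_graft_target hv hq, hwr, Set.singleton_eq_singleton_iff]
      refine iff_of_false (by rintro rfl; exact hv Q.root_mem) fun h => ?_
      exact Q.root_notMem_children q (h ▸ rfl)
    · rw [Q.children_graft_of_ne hv hq (by rintro h; exact hv (h ▸ Q.f_mem w hw)) hfq]
  · simp only [hwv, hw, not_false_eq_true, and_self, true_or]

end Graft

section Contract

def contractFun (v u w : α) : α :=
  if w = v then u else if w ∈ Q.V ∧ w ≠ r ∧ Q.f w = v then Q.f v else Q.f w

theorem contractFun_self : Q.contractFun v u v = u := if_pos rfl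

theorem contractFun_of_mem_children (hw : w ∈ Q.children v) (hwv : w ≠ v) :
    Q.contractFun v u w = Q.f v := by
  rw [contractFun, if_neg hwv]
  exact if_pos hw

theorem contractFun_of_notMem_children (hw : w ∉ Q.children v) (hwv : w ≠ v) :
    Q.contractFun v u w = Q.f w := by
  rw [contractFun, if_neg hwv]
  exact if_neg hw

theorem contractFun_of_notMem (hw : w ∉ Q.V) (hwv : w ≠ v) : Q.contractFun v u w = Q.f w :=
  Q.contractFun_of_notMem_children (fun h => hw h.1) hwv

theorem exists_iterate_contractFun_eq_root (hv : v ∈ Q.V) (hvr : v ≠ r) :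
    ∀ w ∈ Q.V.erase v, ∃ k, (Q.contractFun v u)^[k] w = r := by
  refine exists_iterate_eq_of_forall_exists_lt Q.depth fun w hw hwr => ⟨1, ?_⟩
  obtain ⟨hwv, hw⟩ := Finset.mem_erase.mp hw
  have hdw := Q.depth_eq_depth_f_add_one hw hwr
  rw [iterate_one]
  by_cases hch : w ∈ Q.children v
  · rw [Q.contractFun_of_mem_children hch hwv]
    have hdv := Q.depth_eq_depth_f_add_one hv hvr
    rw [hch.2.2] at hdw
    exact ⟨Finset.mem_erase.mpr ⟨Q.f_ne_self hv hvr, Q.f_mem v hv⟩, by omega⟩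
  · rw [Q.contractFun_of_notMem_children hch hwv]
    exact ⟨Finset.mem_erase.mpr ⟨fun hfw => hch ⟨hw, hwr, hfw⟩, Q.f_mem w hw⟩, by omega⟩

def contract (v u : α) (hv : v ∈ Q.V) (hvr : v ≠ r) (hur : u ≠ r)
    (hu : ∀ w ∉ Q.V, Q.f w ≠ u) : ParentMap α r where
  V := Q.V.erase v
  root_mem := Finset.mem_erase.mpr ⟨hvr.symm, Q.root_mem⟩
  f := Q.contractFun v u
  f_root := by
    rw [Q.contractFun_of_notMem_children (Q.root_notMem_children v) hvr.symm, Q.f_root]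
  f_mem w hw := by
    obtain ⟨hwv, hw⟩ := Finset.mem_erase.mp hw
    by_cases hch : w ∈ Q.children v
    · rw [Q.contractFun_of_mem_children hch hwv]
      exact Finset.mem_erase.mpr ⟨Q.f_ne_self hv hvr, Q.f_mem v hv⟩
    · rw [Q.contractFun_of_notMem_children hch hwv]
      refine Finset.mem_erase.mpr ⟨fun hfw => ?_, Q.f_mem w hw⟩
      have hwr : w = r := by_contra fun hwr => hch ⟨hw, hwr, hfw⟩
      exact hvr (by rw [← hfw, hwr, Q.f_root])
  exists_iterate_eq_root := Q.exists_iterate_contractFun_eq_root hv hvr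
  f_ne_root w hw := by
    by_cases hwv : w = v
    · rw [hwv, contractFun_self]
      exact hur
    have hw : w ∉ Q.V := fun h => hw (Finset.mem_erase.mpr ⟨hwv, h⟩)
    rw [Q.contractFun_of_notMem hw hwv]
    exact Q.f_ne_root w hw
  injOn_compl w w' hw hw' := by
    have key : ∀ {w}, w ∉ Q.V.erase v → w ≠ v → w ∉ Q.V := fun hw hwv h =>
      hw (Finset.mem_erase.mpr ⟨hwv, h⟩)
    by_cases hwv : w = v <;> by_cases hw'v : w' = v
    · exact fun _ => hwv.trans hw'v.symm
    · rw [hwv, contractFun_self, Q.contractFun_of_notMem (key hw' hw'v) hw'v]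
      exact fun h => absurd h.symm (hu w' (key hw' hw'v))
    · rw [hw'v, contractFun_self, Q.contractFun_of_notMem (key hw hwv) hwv]
      exact fun h => absurd h (hu w (key hw hwv))
    · rw [Q.contractFun_of_notMem (key hw hwv) hwv, Q.contractFun_of_notMem (key hw' hw'v) hw'v]
      exact Q.injOn_compl (key hw hwv) (key hw' hw'v)

variable (hv : v ∈ Q.V) (hvr : v ≠ r) (hur : u ≠ r) (hu : ∀ w ∉ Q.V, Q.f w ≠ u)

@[simp] theorem contract_V : (Q.contract v u hv hvr hur hu).V = Q.V.erase v := rfl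

@[simp] theorem contract_f : (Q.contract v u hv hvr hur hu).f = Q.contractFun v u := rfl

theorem children_contract_parent (hlone : Q.children (Q.f v) = {v}) :
    (Q.contract v u hv hvr hur hu).children (Q.f v) = Q.children v := by
  ext w
  simp only [children, contract_V, contract_f, Set.mem_ofPred_eq, Finset.mem_erase]
  constructor
  · rintro ⟨⟨hwv, hw⟩, hwr, hfw⟩
    by_contra hch
    rw [Q.contractFun_of_notMem_children hch hwv] at hfw
    have hw' : w ∈ Q.children (Q.f v) := ⟨hw, hwr, hfw⟩
    rw [hlone] at hw'
    exact hwv hw'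
  · intro hw
    have hwv : w ≠ v := by
      rintro rfl
      exact Q.f_ne_self hv hvr hw.2.2
    exact ⟨⟨hwv, hw.1⟩, hw.2.1, Q.contractFun_of_mem_children hw hwv⟩

end Contract

theorem contract_graft (hv : v ∉ Q.V) (hq : q ∈ Q.V) (hu : u = Q.f v) (hv' hvr hur hu') :
    (Q.graft v q hv hq).contract v u hv' hvr hur hu' = Q := by
  subst hu
  ext w
  · simp [Finset.erase_insert hv]
  · simp only [contract_f]
    by_cases hwv : w = v
    · rw [hwv, contractFun_self]
    by_cases hch : w ∈ (Q.graft v q hv hq).children v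
    · rw [contractFun_of_mem_children _ hch hwv, graft_f, graftFun_self]
      rw [Q.children_graft_self hv hq] at hch
      exact hch.2.2.symm
    · rw [contractFun_of_notMem_children _ hch hwv, graft_f]
      rw [Q.children_graft_self hv hq] at hch
      exact Q.graftFun_of_notMem_children hch hwv

theorem graft_contract (hv : v ∈ Q.V) (hvr : v ≠ r) (hlone : Q.children (Q.f v) = {v}) (hur hu')
    (hq : q = Q.f v) (hv' hq') : (Q.contract v u hv hvr hur hu').graft v q hv' hq' = Q := by
  subst hq
  ext w
  · simp [Finset.insert_erase hv]
  · simp only [graft_f]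
    by_cases hwv : w = v
    · rw [hwv, graftFun_self]
    have hch := Q.children_contract_parent hv hvr hur hu' hlone
    by_cases hw : w ∈ Q.children v
    · rw [graftFun_of_mem_children _ (hch ▸ hw) hwv]
      exact hw.2.2.symm
    · rw [graftFun_of_notMem_children _ (hch ▸ hw) hwv, contract_f]
      exact Q.contractFun_of_notMem_children hw hwv

/-- Following arcs from an arc vertex `v` one either enters the tree, at the vertex that is to
receive `v` as its only child, or returns to `v` along a cycle of arc vertices, in which case `v`
goes below the root. Contraction reverses this: the new arc of `v` points to the start of the
longest backward arc walk ending at the anchor of `v`. -/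
noncomputable def graftTarget (v : α) : α := if Q.landing v ∈ Q.V then Q.landing v else r

def anchor (v : α) : α := if Q.f v = r then v else Q.f v

noncomputable def contractTarget (v : α) : α := Q.source (Q.anchor v)

theorem graftTarget_mem (v : α) : Q.graftTarget v ∈ Q.V := by
  unfold graftTarget
  split_ifs with h
  exacts [h, Q.root_mem]

theorem anchor_mem (hv : v ∈ Q.V) : Q.anchor v ∈ Q.V := by
  unfold anchor
  split_ifs
  exacts [hv, Q.f_mem v hv]

variable [Finite α]

theorem contractTarget_spec (hv : v ∈ Q.V) : ∃ m, Q.IsArcWalk (Q.contractTarget v) m ∧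
    Q.f^[m] (Q.contractTarget v) = Q.anchor v ∧ ∀ w ∉ Q.V, Q.f w ≠ Q.contractTarget v :=
  Q.source_spec (Q.anchor_mem hv)

theorem f_ne_contractTarget (hv : v ∈ Q.V) : ∀ w ∉ Q.V, Q.f w ≠ Q.contractTarget v :=
  (Q.contractTarget_spec hv).choose_spec.2.2

theorem contractTarget_ne_root (hv : v ∈ Q.V) (hvr : v ≠ r) : Q.contractTarget v ≠ r := by
  obtain ⟨m, hwalk, hm, -⟩ := Q.contractTarget_spec hv
  intro h
  rcases m with _ | m
  · rw [iterate_zero_apply, h, anchor] at hm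
    split_ifs at hm with hfr
    exacts [hvr hm.symm, hfr hm.symm]
  · exact hwalk 0 m.succ_pos (by rw [iterate_zero_apply, h]; exact Q.root_mem)

noncomputable def toggle (v : α) : ParentMap α r :=
  if hv : v ∈ Q.V then
    if hvr : v = r then Q
    else Q.contract v (Q.contractTarget v) hv hvr (Q.contractTarget_ne_root hv hvr)
      (Q.f_ne_contractTarget hv)
  else Q.graft v (Q.graftTarget v) hv (Q.graftTarget_mem v)

theorem toggle_of_notMem (hv : v ∉ Q.V) :
    Q.toggle v = Q.graft v (Q.graftTarget v) hv (Q.graftTarget_mem v) :=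
  dif_neg hv

theorem toggle_of_mem (hv : v ∈ Q.V) (hvr : v ≠ r) :
    Q.toggle v = Q.contract v (Q.contractTarget v) hv hvr (Q.contractTarget_ne_root hv hvr)
      (Q.f_ne_contractTarget hv) := by
  rw [toggle, dif_pos hv, dif_neg hvr]

theorem toggle_root : Q.toggle r = Q := by
  rw [toggle, dif_pos Q.root_mem, dif_pos rfl]

theorem anchor_graft (hv : v ∉ Q.V) :
    (Q.graft v (Q.graftTarget v) hv (Q.graftTarget_mem v)).anchor v = Q.landing v := by
  obtain ⟨k, hk, hland, hmid⟩ := Q.exists_first_return hv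
  rw [anchor, graft_f, graftFun_self, graftTarget]
  by_cases hLV : Q.landing v ∈ Q.V
  · rw [if_pos hLV, if_neg (Q.landing_ne_root hv)]
  · rw [if_neg hLV, if_pos rfl]
    rw [← Q.landing_eq hk hland hmid] at hland
    exact (hland.resolve_left hLV).symm

theorem contractTarget_graft (hv : v ∉ Q.V) :
    (Q.graft v (Q.graftTarget v) hv (Q.graftTarget_mem v)).contractTarget v = Q.f v := by
  obtain ⟨k, hk, hland, hmid⟩ := Q.exists_first_return hv
  set Q' := Q.graft v (Q.graftTarget v) hv (Q.graftTarget_mem v)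
  have hagree : ∀ x ∉ (Q'.V : Set α), Q'.f x = Q.f x := fun x hx => by
    simp only [Q', graft_V, Finset.coe_insert, Set.mem_insert_iff, Finset.mem_coe, not_or] at hx
    exact Q.graftFun_of_notMem hx.2 hx.1
  have hwalk : ∀ i < k - 1, Q.f^[i] (Q.f v) ∉ (Q'.V : Set α) := fun i hi => by
    rw [← iterate_succ_apply]
    simpa [Q', not_or] using (hmid (i + 1) (by omega) (by omega)).symm
  have hiter : ∀ i ≤ k - 1, Q'.f^[i] (Q.f v) = Q.f^[i + 1] v := fun i hi => by
    rw [iterate_eq_iterate_of_forall_notMem hagree fun j hj => hwalk j (by omega),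
      iterate_succ_apply]
  rw [contractTarget, Q.anchor_graft hv]
  refine Q'.source_eq (m := k - 1) (fun i hi => ?_) ?_ fun w hw hfw => ?_
  · rw [hiter i hi.le, iterate_succ_apply]
    exact hwalk i hi
  · rw [hiter _ le_rfl, Nat.sub_add_cancel hk, Q.landing_eq hk hland hmid]
  · simp only [Q', graft_V, Finset.mem_insert, not_or] at hw
    rw [hagree w (by simpa [Q'] using hw)] at hfw
    exact hw.1 (Q.injOn_compl hw.2 hv hfw)

theorem landing_contract (hv : v ∈ Q.V) (hvr : v ≠ r) :
    (Q.contract v (Q.contractTarget v) hv hvr (Q.contractTarget_ne_root hv hvr)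
      (Q.f_ne_contractTarget hv)).landing v = Q.anchor v := by
  obtain ⟨m, hwalk, hm, -⟩ := Q.contractTarget_spec hv
  set Q'' := Q.contract v (Q.contractTarget v) hv hvr (Q.contractTarget_ne_root hv hvr)
    (Q.f_ne_contractTarget hv)
  have hagree : ∀ x ∉ (Q.V : Set α), Q''.f x = Q.f x := fun x hx =>
    Q.contractFun_of_notMem hx fun h => hx (h ▸ hv)
  have hiter : ∀ i ≤ m, Q''.f^[i + 1] v = Q.f^[i] (Q.contractTarget v) := fun i hi => by
    rw [iterate_succ_apply, show Q''.f v = Q.contractTarget v from Q.contractFun_self]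
    exact iterate_eq_iterate_of_forall_notMem (m := i) hagree fun j hj => hwalk j (by omega)
  rw [Q''.landing_eq (k := m + 1) m.succ_pos ?_ ?_, hiter m le_rfl, hm]
  · rw [hiter m le_rfl, hm, anchor]
    split_ifs with hfr
    · exact .inr rfl
    · exact .inl (Finset.mem_erase.mpr ⟨Q.f_ne_self hv hvr, Q.f_mem v hv⟩)
  · intro i hi hik
    obtain ⟨j, rfl⟩ := Nat.exists_eq_add_of_lt hi
    rw [zero_add, hiter j (by omega)]
    have := hwalk j (by omega)
    exact ⟨fun h => this (Finset.mem_of_mem_erase h), fun h => this (by rw [h]; exact hv)⟩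

theorem graftTarget_contract (hv : v ∈ Q.V) (hvr : v ≠ r) :
    (Q.contract v (Q.contractTarget v) hv hvr (Q.contractTarget_ne_root hv hvr)
      (Q.f_ne_contractTarget hv)).graftTarget v = Q.f v := by
  rw [graftTarget, Q.landing_contract hv hvr, anchor]
  split_ifs with hfr hmem hmem
  · simp at hmem
  · exact hfr.symm
  · rfl
  · exact absurd (Finset.mem_erase.mpr ⟨Q.f_ne_self hv hvr, Q.f_mem v hv⟩) hmem

theorem toggle_toggle (hv : v ∈ Q.toggleable) : (Q.toggle v).toggle v = Q := by
  by_cases hV : v ∈ Q.V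
  · obtain ⟨hvr, hlone⟩ := Q.ne_root_of_mem_toggleable hv hV
    rw [Q.toggle_of_mem hV hvr, toggle_of_notMem _ (by simp)]
    exact Q.graft_contract hV hvr hlone _ _ (Q.graftTarget_contract hV hvr) _ _
  · rw [Q.toggle_of_notMem hV, toggle_of_mem _ (by simp) (by rintro rfl; exact hV Q.root_mem)]
    exact Q.contract_graft hV _ (Q.contractTarget_graft hV) _ _ _ _

theorem toggleable_toggle (hv : v ∈ Q.toggleable) : (Q.toggle v).toggleable = Q.toggleable := by
  by_cases hV : v ∈ Q.V
  · have hv' : v ∉ (Q.toggle v).V := by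
      rw [Q.toggle_of_mem hV (Q.ne_root_of_mem_toggleable hv hV).1]
      simp
    calc (Q.toggle v).toggleable = ((Q.toggle v).toggle v).toggleable := by
          rw [(Q.toggle v).toggle_of_notMem hv', toggleable_graft]
      _ = Q.toggleable := by rw [Q.toggle_toggle hv]
  · rw [Q.toggle_of_notMem hV, toggleable_graft]

theorem card_toggle (hv : v ∈ Q.toggleable) :
    (Q.toggle v).V.card = Q.V.card + 1 ∨ Q.V.card = (Q.toggle v).V.card + 1 := by
  by_cases hV : v ∈ Q.V
  · rw [Q.toggle_of_mem hV (Q.ne_root_of_mem_toggleable hv hV).1, contract_V,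
      Finset.card_erase_of_mem hV]
    have := Finset.card_pos.mpr ⟨v, hV⟩
    omega
  · rw [Q.toggle_of_notMem hV, graft_V, Finset.card_insert_of_notMem hV]
    exact .inl rfl

open scoped Classical in
/-- The toggled vertex depends only on `Q.toggleable`, which toggling preserves. -/
noncomputable def pivot : α := if h : Q.toggleable.Nonempty then h.some else r

noncomputable def partner : ParentMap α r := Q.toggle Q.pivot

theorem toggleable_partner : Q.partner.toggleable = Q.toggleable := by
  unfold partner pivot
  split_ifs with h
  · exact Q.toggleable_toggle h.some_mem
  · rw [toggle_root]

theorem partner_partner : Q.partner.partner = Q := by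
  have hpivot : Q.partner.pivot = Q.pivot := by
    rw [pivot, pivot, toggleable_partner]
  rw [partner, hpivot, partner]
  unfold pivot
  split_ifs with h
  · exact Q.toggle_toggle h.some_mem
  · rw [toggle_root, toggle_root]

theorem card_partner (h : Q.toggleable.Nonempty) :
    Q.partner.V.card = Q.V.card + 1 ∨ Q.V.card = Q.partner.V.card + 1 := by
  rw [partner, pivot, dif_pos h]
  exact Q.card_toggle h.some_mem

end Toggle

end ParentMap

def GConfig.HasArcOrLoneChild {n : ℕ} (c : GConfig n) : Prop :=
  c.V ≠ Finset.univ ∨ ∃ v, (children c.tree c.root v).ncard = 1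

namespace ParentMap

variable {n : ℕ} {r : Fin n} (Q : ParentMap (Fin n) r)

def toGConfig : GConfig n where
  V := Q.V
  root := r
  hroot := Q.root_mem
  tree := Q.graph
  hedge _ _ h := Q.mem_of_graph_adj h
  hconn v hv w hw := (Q.graph_reachable_root hv).trans (Q.graph_reachable_root hw).symm
  hacyc := Q.graph_isAcyclic
  arc v := if v ∈ Q.V then v else Q.f v
  harcV _ hv := if_pos hv
  harc v hv := by
    rw [if_neg hv]
    exact Q.f_ne_root v hv
  hinj v w hv hw := by
    rw [if_neg hv, if_neg hw]
    exact Q.injOn_compl hv hw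

theorem children_graph (q : Fin n) : _root_.children Q.graph r q = Q.children q := by
  ext w
  simp only [_root_.children, ParentMap.children, Set.mem_ofPred_eq]
  constructor
  · rintro ⟨hadj, hd⟩
    obtain ⟨hq, hw⟩ := Q.mem_of_graph_adj hadj
    rw [Q.graph_dist_root hw, Q.graph_dist_root hq] at hd
    have hwr : w ≠ r := by rintro rfl; simp at hd
    exact ⟨hw, hwr, Q.f_eq_of_graph_adj hadj.symm (by omega)⟩
  · rintro ⟨hw, hwr, rfl⟩
    refine ⟨(Q.graph_adj_f hw hwr).symm, ?_⟩
    rw [Q.graph_dist_root hw, Q.graph_dist_root (Q.f_mem w hw)]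
    exact Q.depth_eq_depth_f_add_one hw hwr

theorem toggleable_nonempty_iff : Q.toggleable.Nonempty ↔ Q.toGConfig.HasArcOrLoneChild := by
  simp only [GConfig.HasArcOrLoneChild, toGConfig, children_graph, Set.ncard_eq_one]
  constructor
  · rintro ⟨v, hv | hv⟩
    · exact .inl fun h => hv (h ▸ Finset.mem_univ v)
    · exact .inr ⟨Q.f v, v, hv⟩
  · rintro (h | ⟨q, w, hw⟩)
    · obtain ⟨v, hv⟩ : ∃ v, v ∉ Q.V := by
        by_contra! h'
        exact h (Finset.eq_univ_iff_forall.mpr h')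
      exact ⟨v, .inl hv⟩
    · have hwq : w ∈ Q.children q := hw ▸ rfl
      exact ⟨w, .inr (hwq.2.2 ▸ hw)⟩

end ParentMap

namespace GConfig

variable {n : ℕ} (c : GConfig n) {r v w : Fin n}

theorem ext {c c' : GConfig n} (hV : c.V = c'.V) (hroot : c.root = c'.root)
    (htree : c.tree = c'.tree) (harc : c.arc = c'.arc) : c = c' := by
  cases c
  cases c'
  simp_all

theorem reachable_root (hv : v ∈ c.V) : c.tree.Reachable c.root v :=
  c.hconn _ c.hroot _ hv

theorem treeParent_mem (hv : v ∈ c.V) : c.tree.treeParent c.root v ∈ c.V := by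
  by_cases hvr : v = c.root
  · rw [hvr, treeParent_self]
    exact c.hroot
  · exact (c.hedge _ _ (treeParent_spec (c.reachable_root hv) hvr).1).1

theorem tree_adj_iff : c.tree.Adj v w ↔ v ≠ w ∧
    ((v ∈ c.V ∧ v ≠ c.root ∧ c.tree.treeParent c.root v = w) ∨
      (w ∈ c.V ∧ w ≠ c.root ∧ c.tree.treeParent c.root w = v)) := by
  constructor
  · intro h
    obtain ⟨hv, hw⟩ := c.hedge _ _ h
    refine ⟨h.ne, ?_⟩
    rcases c.hacyc.dist_eq_dist_add_one_of_adj_of_reachable c.root h (c.reachable_root hv)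
      with hd | hd
    · refine .inl ⟨hv, by rintro rfl; simp at hd, ?_⟩
      exact (c.hacyc.eq_treeParent h.symm (c.reachable_root hw) hd.symm).symm
    · refine .inr ⟨hw, by rintro rfl; simp at hd, ?_⟩
      exact (c.hacyc.eq_treeParent h (c.reachable_root hv) hd.symm).symm
  · rintro ⟨-, ⟨hv, hvr, rfl⟩ | ⟨hw, hwr, rfl⟩⟩
    · exact (treeParent_spec (c.reachable_root hv) hvr).1.symm
    · exact (treeParent_spec (c.reachable_root hw) hwr).1

noncomputable def toParentMap (h : c.root = r) : ParentMap (Fin n) r where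
  V := c.V
  root_mem := h ▸ c.hroot
  f v := if v ∈ c.V then c.tree.treeParent c.root v else c.arc v
  f_root := by
    subst h
    rw [if_pos c.hroot, treeParent_self]
  f_mem v hv := by
    rw [if_pos hv]
    exact c.treeParent_mem hv
  exists_iterate_eq_root := by
    subst h
    refine exists_iterate_eq_of_forall_exists_lt (c.tree.dist c.root) fun v hv hvr => ⟨1, ?_⟩
    have := (treeParent_spec (c.reachable_root hv) hvr).2.2
    rw [iterate_one, if_pos (Finset.mem_coe.mp hv)]
    exact ⟨c.treeParent_mem hv, by omega⟩
  f_ne_root v hv := by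
    rw [if_neg hv, ← h]
    exact c.harc v hv
  injOn_compl v w hv hw := by
    rw [if_neg hv, if_neg hw]
    exact c.hinj v w hv hw

theorem toGConfig_toParentMap (h : c.root = r) : (c.toParentMap h).toGConfig = c := by
  subst h
  refine GConfig.ext rfl rfl ?_ ?_
  · ext v w
    rw [show (c.toParentMap rfl).toGConfig.tree = (c.toParentMap rfl).graph from rfl,
      ParentMap.graph_adj, c.tree_adj_iff]
    simp only [toParentMap]
    grind
  · funext v
    show (if v ∈ c.V then v else if v ∈ c.V then _ else c.arc v) = c.arc v
    split_ifs with hv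
    exacts [(c.harcV v hv).symm, rfl]

theorem hasArcOrLoneChild_iff (h : c.root = r) :
    c.HasArcOrLoneChild ↔ (c.toParentMap h).toggleable.Nonempty := by
  rw [ParentMap.toggleable_nonempty_iff, toGConfig_toParentMap]

theorem _root_.ParentMap.toParentMap_toGConfig (Q : ParentMap (Fin n) r) :
    Q.toGConfig.toParentMap rfl = Q := by
  refine ParentMap.ext rfl (funext fun v => ?_)
  show (if v ∈ Q.V then Q.graph.treeParent r v else if v ∈ Q.V then v else Q.f v) = Q.f v
  split_ifs with hv
  exacts [Q.treeParent_graph hv, rfl]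

noncomputable def equivParentMap (r : Fin n) :
    {c : GConfig n // c.root = r} ≃ ParentMap (Fin n) r where
  toFun c := c.1.toParentMap c.2
  invFun Q := ⟨Q.toGConfig, rfl⟩
  left_inv c := Subtype.ext (c.1.toGConfig_toParentMap c.2)
  right_inv Q := Q.toParentMap_toGConfig

end GConfig

/-- There is a sign-reversing involution on the `G`-configurations of size `n` (root `1`)
that are not lone-child-avoiding spanning trees, i.e. those having an arc vertex or a tree
vertex with exactly one child: it changes the number of tree vertices by exactly one,
hence reverses the weight `(-1)^{n-k}`. -/
theorem stmt11 (n : ℕ) (hn : 0 < n) :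
    ∃ φ : {c : GConfig n // c.root = ⟨0, hn⟩ ∧
        (c.V ≠ Finset.univ ∨ ∃ v, (children c.tree c.root v).ncard = 1)} →
      {c : GConfig n // c.root = ⟨0, hn⟩ ∧
        (c.V ≠ Finset.univ ∨ ∃ v, (children c.tree c.root v).ncard = 1)},
      (∀ c, φ (φ c) = c) ∧
      (∀ c, (φ c).1.V.card = c.1.V.card + 1 ∨ c.1.V.card = (φ c).1.V.card + 1) := by
  let E : {c : GConfig n // c.root = ⟨0, hn⟩ ∧ c.HasArcOrLoneChild} ≃
      {Q : ParentMap (Fin n) ⟨0, hn⟩ // Q.toggleable.Nonempty} :=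
    (Equiv.subtypeSubtypeEquivSubtypeInter _ _).symm.trans <|
      (GConfig.equivParentMap _).subtypeEquiv fun c => c.1.hasArcOrLoneChild_iff c.2
  refine ⟨fun c => E.symm ⟨(E c).1.partner, (E c).1.toggleable_partner ▸ (E c).2⟩,
    fun c => ?_, fun c => (E c).1.card_partner (E c).2⟩
  simp only [Equiv.apply_symm_apply, ParentMap.partner_partner]
  exact E.symm_apply_apply c
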